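/- Let η > 0, Ω > 0, let H_S^(r) be an N×N complex Hermitian matrix, let G_c : ℝ → ℂ be continuous, and let ψ_Ω : [0,∞) → ℂ^N be a continuously differentiable solution of ψ_Ω'(t) = −i (H_S^(r) + (ηΩ/π) I_N) ψ_Ω(t) − ∫₀ᵗ (G_Ω(t−s) + G_c(t−s)) ψ_Ω(s) ds with ψ_Ω(0) = ψ_0. Then for all t ≥ 0 the integral identity holds: ψ_Ω(t) − ψ_0 = −i H_S^(r) ∫₀ᵗ ψ_Ω(τ) dτ − ∫₀ᵗ ∫₀^τ G_c(τ−s) ψ_Ω(s) ds dτ − iη ((1/π) arctan(Ωt)) ψ_0 − iη ∫₀ᵗ ∫₀^τ f_Ω(τ−s) ψ_Ω'(s) ds dτ; in particular the divergent counterterm (ηΩ/π) cancels. -/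

import Mathlib

open MeasureTheory Matrix

/-- The regularized delta-sequence `f_Ω(t) = (1/π)·Ω/(1+(Ωt)²)`. -/
noncomputable def fOmega (Ω t : ℝ) : ℝ := (1 / Real.pi) * Ω / (1 + (Ω * t) ^ 2)

/-- The cutoff Ohmic correlation function `G_Ω(t) = iη f_Ω'(t) = −2iηΩ³t/(π(1+(Ωt)²)²)`. -/
noncomputable def GOmega (η Ω t : ℝ) : ℂ :=
  -2 * Complex.I * (η : ℂ) * (Ω : ℂ) ^ 3 * (t : ℂ) /
    ((Real.pi : ℂ) * (1 + ((Ω : ℂ) * (t : ℂ)) ^ 2) ^ 2)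

/-
Since `G_Ω = iη f_Ω'`, integrating by parts in the memory term gives
`∫₀^τ G_Ω(τ-s) ψ(s) ds = iη (f_Ω(τ) ψ₀ - f_Ω(0) ψ(τ) + ∫₀^τ f_Ω(τ-s) ψ'(s) ds)`.
As `f_Ω(0) = Ω/π`, the boundary term `-iη f_Ω(0) ψ(τ)` equals the counterterm
`-i(ηΩ/π) ψ(τ)`, so the two cancel in the equation for `ψ'`. Integrating the remaining equation
over `[0, t]`, with `∫₀ᵗ f_Ω = arctan(Ωt)/π`, gives the identity.
-/

open Set intervalIntegral

theorem Set.uIcc_subset_Ici_of_le {α : Type*} [LinearOrder α] {a b : α} (h : a ≤ b) :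
    uIcc a b ⊆ Ici a := by
  rw [uIcc_of_le h]
  exact Icc_subset_Ici_self

theorem integral_eq_sub_of_hasDerivWithinAt_Ici {E : Type*} [NormedAddCommGroup E]
    [NormedSpace ℝ E] [CompleteSpace E] {f f' : ℝ → E} {a b : ℝ}
    (hf : ∀ x ∈ Ici a, HasDerivWithinAt f (f' x) (Ici a) x) (hf' : ContinuousOn f' (Ici a))
    (hab : a ≤ b) :
    ∫ x in a..b, f' x = f b - f a :=
  integral_eq_sub_of_hasDeriv_right_of_le hab
    (fun x hx => (hf x hx.1).continuousWithinAt.mono Icc_subset_Ici_self)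
    (fun x hx => ((hf x hx.1.le).hasDerivAt (Ici_mem_nhds hx.1)).hasDerivWithinAt)
    ((hf'.mono (uIcc_subset_Ici_of_le hab)).intervalIntegrable)

theorem integral_deriv_comp_sub_smul {𝕜 E : Type*} [NontriviallyNormedField 𝕜]
    [NormedAlgebra ℝ 𝕜] [NormedAddCommGroup E] [NormedSpace 𝕜 E] [NormedSpace ℝ E]
    [IsScalarTower ℝ 𝕜 E] [CompleteSpace E] {f f' : ℝ → 𝕜} {ψ ψ' : ℝ → E} {a b : ℝ}
    (hf : ∀ x, HasDerivAt f (f' x) x) (hf' : Continuous f') (hψ : ContinuousOn ψ (uIcc a b))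
    (hψψ' : ∀ x ∈ Ioo (min a b) (max a b), HasDerivWithinAt ψ (ψ' x) (Ioi x) x)
    (hψ' : IntervalIntegrable ψ' volume a b) :
    ∫ s in a..b, f' (b - s) • ψ s =
      f (b - a) • ψ a - f 0 • ψ b + ∫ s in a..b, f (b - s) • ψ' s := by
  have hu : ∀ s, HasDerivAt (fun s => f (b - s)) (-f' (b - s)) s := fun s => by
    simpa using (hf (b - s)).comp_const_sub b s
  rw [integral_smul_deriv_eq_deriv_smul_of_hasDeriv_right
    (fun s _ => (hu s).continuousAt.continuousWithinAt) hψ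
    (fun s _ => (hu s).hasDerivWithinAt) hψψ'
    ((hf'.comp (continuous_sub_left b)).neg.intervalIntegrable a b) hψ']
  simp only [sub_self, neg_smul, intervalIntegral.integral_neg]
  abel

theorem continuousOn_integral_comp_sub_smul {𝕜 E : Type*} [NormedField 𝕜]
    [NormedAddCommGroup E] [NormedSpace 𝕜 E] [NormedSpace ℝ E] {K : ℝ → 𝕜} (hK : Continuous K)
    {ψ : ℝ → E} {a : ℝ} (hψ : ContinuousOn ψ (Ici a)) :
    ContinuousOn (fun τ => ∫ s in a..τ, K (τ - s) • ψ s) (Ici a) := by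
  -- extend `ψ` continuously to the left of `a`, making the parametric integrand jointly continuous
  have hext : Continuous fun s => ψ (max s a) :=
    hψ.comp_continuous (continuous_id.max continuous_const) fun s => le_max_right s a
  refine (continuous_parametric_intervalIntegral_of_continuous (μ := volume)
    (f := fun τ s => K (τ - s) • ψ (max s a)) ?_ continuous_id).continuousOn.congr
    fun τ hτ => integral_congr fun s hs => ?_
  · exact (hK.comp (continuous_fst.sub continuous_snd)).smul (hext.comp continuous_snd)
  · rw [uIcc_of_le (mem_Ici.mp hτ)] at hs
    simp only [max_eq_left hs.1]

theorem Matrix.mulVec_intervalIntegral {𝕜 m n : Type*} [RCLike 𝕜] [Fintype m] [Fintype n]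
    (A : Matrix m n 𝕜) {f : ℝ → n → 𝕜} {a b : ℝ} (hf : IntervalIntegrable f volume a b) :
    A *ᵥ ∫ x in a..b, f x = ∫ x in a..b, A *ᵥ f x :=
  (A.mulVecLin.toContinuousLinearMap.intervalIntegral_comp_comm hf).symm

theorem hasDerivAt_fOmega (Ω u : ℝ) :
    HasDerivAt (fOmega Ω) (-(2 * Ω ^ 3 * u) / (Real.pi * (1 + (Ω * u) ^ 2) ^ 2)) u := by
  have hden : HasDerivAt (fun t => 1 + (Ω * t) ^ 2) (2 * Ω ^ 2 * u) u :=
    ((((hasDerivAt_id u).const_mul Ω).pow 2).const_add 1).congr_deriv (by simp; ring)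
  refine ((hasDerivAt_const u (1 / Real.pi * Ω)).div hden (by positivity)).congr_deriv ?_
  field_simp
  ring

theorem continuous_fOmega (Ω : ℝ) : Continuous (fOmega Ω) :=
  continuous_iff_continuousAt.2 fun u => (hasDerivAt_fOmega Ω u).continuousAt

theorem continuous_deriv_fOmega (Ω : ℝ) : Continuous (deriv (fOmega Ω)) := by
  rw [funext fun u => (hasDerivAt_fOmega Ω u).deriv]
  exact Continuous.div (by fun_prop) (by fun_prop) fun u => by positivity

theorem GOmega_eq_mul_deriv_fOmega (η Ω u : ℝ) :
    GOmega η Ω u = Complex.I * η * ((deriv (fOmega Ω) u : ℝ) : ℂ) := by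
  have hden : (1 + (Ω * u : ℂ) ^ 2) ≠ 0 := by
    exact_mod_cast (by positivity : (1 + (Ω * u) ^ 2) ≠ 0)
  rw [(hasDerivAt_fOmega Ω u).deriv, GOmega]
  push_cast
  field_simp

theorem continuous_GOmega (η Ω : ℝ) : Continuous (GOmega η Ω) := by
  simp only [funext (GOmega_eq_mul_deriv_fOmega η Ω)]
  exact continuous_const.mul (Complex.continuous_ofReal.comp (continuous_deriv_fOmega Ω))

theorem fOmega_zero (Ω : ℝ) : fOmega Ω 0 = Ω / Real.pi := by
  simp [fOmega, div_eq_inv_mul, mul_comm]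

theorem integral_fOmega (Ω t : ℝ) :
    ∫ τ in (0 : ℝ)..t, fOmega Ω τ = 1 / Real.pi * Real.arctan (Ω * t) := by
  have h : ∀ τ, HasDerivAt (fun x => 1 / Real.pi * Real.arctan (Ω * x)) (fOmega Ω τ) τ :=
    fun τ => by
      refine (((Real.hasDerivAt_arctan (Ω * τ)).comp τ
        ((hasDerivAt_id τ).const_mul Ω)).const_mul (1 / Real.pi)).congr_deriv ?_
      simp only [fOmega, mul_one]
      ring
  rw [integral_eq_sub_of_hasDerivAt (fun τ _ => h τ)
    ((continuous_fOmega Ω).intervalIntegrable _ _)]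
  simp

theorem integral_GOmega_smul {E : Type*} [NormedAddCommGroup E] [NormedSpace ℂ E]
    [CompleteSpace E] (η Ω : ℝ) {ψ ψ' : ℝ → E} {τ : ℝ}
    (hψ : ∀ t ∈ Ici (0 : ℝ), HasDerivWithinAt ψ (ψ' t) (Ici 0) t)
    (hψ' : ContinuousOn ψ' (Ici 0)) (hτ : 0 ≤ τ) :
    ∫ s in (0 : ℝ)..τ, GOmega η Ω (τ - s) • ψ s =
      (Complex.I * η) • (((fOmega Ω τ : ℝ) : ℂ) • ψ 0 - ((fOmega Ω 0 : ℝ) : ℂ) • ψ τ +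
        ∫ s in (0 : ℝ)..τ, ((fOmega Ω (τ - s) : ℝ) : ℂ) • ψ' s) := by
  have hIcc := uIcc_subset_Ici_of_le hτ
  have hf u : HasDerivAt (fun u => ((fOmega Ω u : ℝ) : ℂ)) (deriv (fOmega Ω) u : ℝ) u :=
    (hasDerivAt_fOmega Ω u).differentiableAt.hasDerivAt.ofReal_comp
  simp only [GOmega_eq_mul_deriv_fOmega, mul_smul (Complex.I * η)]
  rw [intervalIntegral.integral_smul,
    integral_deriv_comp_sub_smul hf (Complex.continuous_ofReal.comp (continuous_deriv_fOmega Ω))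
      (fun x hx => (hψ x (hIcc hx)).continuousWithinAt.mono hIcc)
      (fun x hx => ?_) ((hψ'.mono hIcc).intervalIntegrable), sub_zero]
  rw [min_eq_left hτ, max_eq_right hτ] at hx
  exact ((hψ x hx.1.le).hasDerivAt (Ici_mem_nhds hx.1)).hasDerivWithinAt

theorem ohmic_deriv_eq_renormalized {N : ℕ} {η Ω τ : ℝ} {HS : Matrix (Fin N) (Fin N) ℂ}
    {Gc : ℝ → ℂ} (hGc : Continuous Gc) {ψ ψ' : ℝ → Fin N → ℂ}
    (hψ : ∀ t ∈ Ici (0 : ℝ), HasDerivWithinAt ψ (ψ' t) (Ici 0) t)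
    (hψ' : ContinuousOn ψ' (Ici 0)) (hτ : 0 ≤ τ)
    (heq : ψ' τ =
      (-Complex.I) • (HS + ((η * Ω / Real.pi : ℝ) : ℂ) • (1 : Matrix (Fin N) (Fin N) ℂ)) *ᵥ ψ τ -
        ∫ s in (0 : ℝ)..τ, (GOmega η Ω (τ - s) + Gc (τ - s)) • ψ s) :
    ψ' τ = (-Complex.I) • HS *ᵥ ψ τ - (∫ s in (0 : ℝ)..τ, Gc (τ - s) • ψ s) -
      (Complex.I * η) • ((fOmega Ω τ : ℝ) : ℂ) • ψ 0 -
      (Complex.I * η) • ∫ s in (0 : ℝ)..τ, ((fOmega Ω (τ - s) : ℝ) : ℂ) • ψ' s := by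
  have hIcc := uIcc_subset_Ici_of_le hτ
  have hψc : ContinuousOn ψ (uIcc 0 τ) := fun x hx =>
    (hψ x (hIcc hx)).continuousWithinAt.mono hIcc
  have hK {K : ℝ → ℂ} (hK : Continuous K) :
      IntervalIntegrable (fun s => K (τ - s) • ψ s) volume 0 τ :=
    ((hK.comp (continuous_sub_left τ)).continuousOn.smul hψc).intervalIntegrable
  rw [heq]
  simp only [add_smul]
  rw [integral_add (hK (continuous_GOmega η Ω)) (hK hGc), integral_GOmega_smul η Ω hψ hψ' hτ,
    fOmega_zero, add_mulVec, smul_mulVec, one_mulVec]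
  -- since `f_Ω(0) = Ω/π`, the boundary term of the integration by parts cancels the counterterm
  push_cast
  module

theorem ohmic_integral_identity_general
    (N : ℕ) (η Ω : ℝ)
    (HS : Matrix (Fin N) (Fin N) ℂ)
    (Gc : ℝ → ℂ) (hGc : Continuous Gc)
    (ψ0 : Fin N → ℂ) (ψΩ ψΩ' : ℝ → Fin N → ℂ)
    (hψdiff : ∀ t ∈ Set.Ici (0:ℝ), HasDerivWithinAt ψΩ (ψΩ' t) (Set.Ici 0) t)
    (hψ'cont : ContinuousOn ψΩ' (Set.Ici 0))
    (hψ0 : ψΩ 0 = ψ0)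
    (heq : ∀ t : ℝ, 0 ≤ t →
      ψΩ' t =
        (-Complex.I) • (HS + ((η * Ω / Real.pi : ℝ) : ℂ) • (1 : Matrix (Fin N) (Fin N) ℂ)).mulVec (ψΩ t) -
          ∫ s in (0:ℝ)..t, (GOmega η Ω (t - s) + Gc (t - s)) • ψΩ s) :
    ∀ t : ℝ, 0 ≤ t →
      ψΩ t - ψ0 =
        (-Complex.I) • HS.mulVec (∫ τ in (0:ℝ)..t, ψΩ τ) -
          (∫ τ in (0:ℝ)..t, ∫ s in (0:ℝ)..τ, Gc (τ - s) • ψΩ s) -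
          (Complex.I * (η : ℂ)) • (((1 / Real.pi) * Real.arctan (Ω * t) : ℝ) : ℂ) • ψ0 -
          (Complex.I * (η : ℂ)) •
            ∫ τ in (0:ℝ)..t, ∫ s in (0:ℝ)..τ, ((fOmega Ω (τ - s) : ℝ) : ℂ) • ψΩ' s := by
  intro t ht
  subst hψ0
  have hIcc := uIcc_subset_Ici_of_le ht
  have hψ : ContinuousOn ψΩ (Ici 0) := fun x hx => (hψdiff x hx).continuousWithinAt
  have hint {F : ℝ → Fin N → ℂ} (hF : ContinuousOn F (Ici 0)) :
      IntervalIntegrable F volume 0 t :=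
    (hF.mono hIcc).intervalIntegrable
  have hf : Continuous fun τ => ((fOmega Ω τ : ℝ) : ℂ) :=
    Complex.continuous_ofReal.comp (continuous_fOmega Ω)
  have h1 : IntervalIntegrable (fun τ => (-Complex.I) • HS *ᵥ ψΩ τ) volume 0 t :=
    hint (by fun_prop)
  have h2 := hint (continuousOn_integral_comp_sub_smul hGc hψ)
  have h3 : IntervalIntegrable (fun τ => (Complex.I * η) • ((fOmega Ω τ : ℝ) : ℂ) • ψΩ 0)
      volume 0 t :=
    Continuous.intervalIntegrable (by fun_prop) 0 t
  have h4 : IntervalIntegrable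
      (fun τ => (Complex.I * η) • ∫ s in (0 : ℝ)..τ, ((fOmega Ω (τ - s) : ℝ) : ℂ) • ψΩ' s)
      volume 0 t :=
    hint ((continuousOn_integral_comp_sub_smul hf hψ'cont).const_smul (Complex.I * η))
  rw [← integral_eq_sub_of_hasDerivWithinAt_Ici hψdiff hψ'cont ht, integral_congr fun τ hτ =>
      ohmic_deriv_eq_renormalized hGc hψdiff hψ'cont (hIcc hτ) (heq τ (hIcc hτ)),
    intervalIntegral.integral_sub ((h1.sub h2).sub h3) h4,
    intervalIntegral.integral_sub (h1.sub h2) h3, intervalIntegral.integral_sub h1 h2,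
    intervalIntegral.integral_smul, intervalIntegral.integral_smul,
    intervalIntegral.integral_smul, intervalIntegral.integral_smul_const,
    intervalIntegral.integral_ofReal, integral_fOmega,
    mulVec_intervalIntegral HS (hint hψ)]

/-- Let `ψ_Ω` be a continuously differentiable solution of
`ψ_Ω'(t) = −i(H_S^(r) + (ηΩ/π)I)ψ_Ω(t) − ∫₀ᵗ (G_Ω(t−s) + G_c(t−s)) ψ_Ω(s) ds` with
`ψ_Ω(0) = ψ_0`. Then for all `t ≥ 0`,
`ψ_Ω(t) − ψ_0 = −i H_S^(r) ∫₀ᵗ ψ_Ω − ∫₀ᵗ∫₀^τ G_c(τ−s) ψ_Ω(s) ds dτ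
  − iη((1/π) arctan(Ωt)) ψ_0 − iη ∫₀ᵗ∫₀^τ f_Ω(τ−s) ψ_Ω'(s) ds dτ`;
in particular the divergent counterterm `ηΩ/π` cancels. -/
theorem ohmic_integral_identity
    (N : ℕ) (η Ω : ℝ) (hη : 0 < η) (hΩ : 0 < Ω)
    (HS : Matrix (Fin N) (Fin N) ℂ) (hHS : HS.IsHermitian)
    (Gc : ℝ → ℂ) (hGc : Continuous Gc)
    (ψ0 : Fin N → ℂ) (ψΩ ψΩ' : ℝ → Fin N → ℂ)
    (hψdiff : ∀ t ∈ Set.Ici (0:ℝ), HasDerivWithinAt ψΩ (ψΩ' t) (Set.Ici 0) t)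
    (hψ'cont : ContinuousOn ψΩ' (Set.Ici 0))
    (hψ0 : ψΩ 0 = ψ0)
    (heq : ∀ t : ℝ, 0 ≤ t →
      ψΩ' t =
        (-Complex.I) • (HS + ((η * Ω / Real.pi : ℝ) : ℂ) • (1 : Matrix (Fin N) (Fin N) ℂ)).mulVec (ψΩ t) -
          ∫ s in (0:ℝ)..t, (GOmega η Ω (t - s) + Gc (t - s)) • ψΩ s) :
    ∀ t : ℝ, 0 ≤ t →
      ψΩ t - ψ0 =
        (-Complex.I) • HS.mulVec (∫ τ in (0:ℝ)..t, ψΩ τ) -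
          (∫ τ in (0:ℝ)..t, ∫ s in (0:ℝ)..τ, Gc (τ - s) • ψΩ s) -
          (Complex.I * (η : ℂ)) • (((1 / Real.pi) * Real.arctan (Ω * t) : ℝ) : ℂ) • ψ0 -
          (Complex.I * (η : ℂ)) •
            ∫ τ in (0:ℝ)..t, ∫ s in (0:ℝ)..τ, ((fOmega Ω (τ - s) : ℝ) : ℂ) • ψΩ' s :=
  ohmic_integral_identity_general N η Ω HS Gc hGc ψ0 ψΩ ψΩ' hψdiff hψ'cont hψ0 heq
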